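/- Let (X, ω) be a symplectic manifold with a Hamiltonian S^1-action with moment map μ : X → R. Define the S^1-action on X × C by t·(x,z) = (t·x, e^{-2πit} z) and Φ(x,z) = μ(x) − |z|^2. Then for ε ∈ R, the S^1-action on Φ^{-1}(ε) is free if and only if the S^1-action on μ^{-1}(ε) is free. -/

import Mathlib

open Complex

/-! On the zero section `z = 0` the level set `Φ⁻¹(ε)` is `μ⁻¹(ε)` and the action is the
original one. Off it, the rotation `z ↦ e^{-2πit} z` alone fixes `z ≠ 0` only for `t ∈ ℤ`. -/

theorem Complex.exp_neg_two_pi_I_mul_eq_one_iff (t : ℝ) :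
    exp (-(2 * Real.pi * I * t)) = 1 ↔ ∃ m : ℤ, t = m := by
  have h2πI : (2 * Real.pi * I : ℂ) ≠ 0 := by simp [Real.pi_ne_zero, I_ne_zero]
  rw [exp_eq_one_iff, neg_surjective.exists]
  refine exists_congr fun n => ?_
  rw [Int.cast_neg, neg_mul, neg_inj, mul_comm _ (t : ℂ), mul_left_inj' h2πI]
  norm_cast

theorem Complex.exists_int_eq_of_exp_mul_eq_self {t : ℝ} {z : ℂ} (hz : z ≠ 0)
    (h : exp (-(2 * Real.pi * I * t)) * z = z) : ∃ m : ℤ, t = m :=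
  (exp_neg_two_pi_I_mul_eq_one_iff t).mp (mul_eq_right₀ hz |>.mp h)

theorem cut_action_free_iff_general {X : Type*} (act : ℝ → X → X)
    (μ : X → ℝ) (ε : ℝ) :
    (∀ p : X × ℂ, μ p.1 - Complex.normSq p.2 = ε →
        ∀ t : ℝ, (act t p.1, Complex.exp (-(2 * Real.pi * Complex.I * t)) * p.2) = p →
          ∃ m : ℤ, t = m) ↔
      (∀ x : X, μ x = ε → ∀ t : ℝ, act t x = x → ∃ m : ℤ, t = m) := by
  constructor
  · intro h x hx t ht
    exact h (x, 0) (by simpa using hx) t (by simp [ht])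
  · rintro h ⟨x, z⟩ hp t ht
    obtain ⟨hx, hz⟩ := Prod.mk.inj ht
    rcases eq_or_ne z 0 with rfl | hz0
    · exact h x (by simpa using hp) t hx
    · exact exists_int_eq_of_exp_mul_eq_self hz0 hz

/-- Symplectic cutting: let `X` carry an `S¹ = ℝ/ℤ`-action (encoded as a `1`-periodic
`ℝ`-action `act`) with an invariant moment map `μ : X → ℝ`.  Define the `S¹`-action on
`X × ℂ` by `t·(x,z) = (t·x, e^{-2πit} z)` and `Φ(x,z) = μ(x) - |z|²`.  Then for any
`ε ∈ ℝ`, the `S¹`-action on `Φ⁻¹(ε)` is free iff the `S¹`-action on `μ⁻¹(ε)` is free.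
(Freeness of the `S¹`-action means that `act t x = x` forces `t ∈ ℤ`.) -/
theorem cut_action_free_iff {X : Type*} (act : ℝ → X → X)
    (hact0 : ∀ x, act 0 x = x)
    (hactadd : ∀ s t x, act (s + t) x = act s (act t x))
    (hactper : ∀ t x, act (t + 1) x = act t x)
    (μ : X → ℝ) (hμ : ∀ t x, μ (act t x) = μ x) (ε : ℝ) :
    (∀ p : X × ℂ, μ p.1 - Complex.normSq p.2 = ε →
        ∀ t : ℝ, (act t p.1, Complex.exp (-(2 * Real.pi * Complex.I * t)) * p.2) = p →
          ∃ m : ℤ, t = m) ↔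
      (∀ x : X, μ x = ε → ∀ t : ℝ, act t x = x → ∃ m : ℤ, t = m) :=
  cut_action_free_iff_general act μ ε
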